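/- Let R be a commutative ring of prime characteristic p and φ : R → R a p^{-1}-linear map with φ surjective. Suppose that for every nonzero c ∈ R, the ideal J_c = Σ_{e≥0} R·φ^e(cR) equals R. Then for every nonzero c ∈ R there exist N ≥ 1 and r ∈ R and an R-linear map ψ : F^N_* R → R with ψ(c) = 1, i.e., an additive map ψ : R → R satisfying ψ(s^{p^N} x) = s ψ(x) and ψ(c) = 1. -/

import Mathlib

/-!
Write `S_N(c) = φ^N(cR)`. Each `S_N(c)` is an additive subgroup stable under multiplication by `R`,
since `r φ^N(y) = φ^N(r^{p^N} y)`. Surjectivity of `φ` makes these sets increase with `N`: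
`φ^m(c^{p^m} w) = c φ^m(w)`, so `φ^m(cR) ⊇ cR`. Hence every element of `J_c` lies in `S_N(c)` for all
large `N`; applied to `1 ∈ J_c` this gives `φ^N(cv) = 1`, and `ψ = φ^N(v · -)` is the required map.
-/

open Filter

section InvFrobeniusLinear

variable {R : Type*} [CommRing R] {p : ℕ} {φ : R → R}

lemma iterate_map_add_of_map_add (hadd : ∀ x y : R, φ (x + y) = φ x + φ y) (k : ℕ) (x y : R) :
    φ^[k] (x + y) = φ^[k] x + φ^[k] y :=
  iterate_map_add (AddMonoidHom.mk' φ hadd) k x y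

lemma iterate_pow_pow_mul (hlin : ∀ r x : R, φ (r ^ p * x) = r * φ x) (k : ℕ) (s x : R) :
    φ^[k] (s ^ p ^ k * x) = s * φ^[k] x := by
  induction k generalizing s x with
  | zero => simp
  | succ k ih =>
    rw [Function.iterate_succ_apply, Function.iterate_succ_apply, pow_succ, pow_mul, hlin, ih]

lemma exists_iterate_mul_eq_of_le (hlin : ∀ r x : R, φ (r ^ p * x) = r * φ x)
    (hsurj : Function.Surjective φ) (hp : 0 < p) (c x : R) {e N : ℕ} (he : e ≤ N) :
    ∃ v, φ^[N] (c * v) = φ^[e] (c * x) := by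
  obtain ⟨m, rfl⟩ := Nat.exists_eq_add_of_le he
  obtain ⟨w, hw⟩ := hsurj.iterate m x
  refine ⟨c ^ (p ^ m - 1) * w, ?_⟩
  have hc : c * (c ^ (p ^ m - 1) * w) = c ^ p ^ m * w := by
    rw [← mul_assoc, ← pow_succ', Nat.sub_add_cancel (Nat.one_le_pow _ _ hp)]
  rw [hc, Function.iterate_add_apply, iterate_pow_pow_mul hlin, hw]

lemma eventually_exists_iterate_mul_eq_of_mem_span (hadd : ∀ x y : R, φ (x + y) = φ x + φ y)
    (hlin : ∀ r x : R, φ (r ^ p * x) = r * φ x) (hsurj : Function.Surjective φ) (hp : 0 < p)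
    (c y : R) (hy : y ∈ Ideal.span {y : R | ∃ (e : ℕ) (x : R), y = φ^[e] (c * x)}) :
    ∀ᶠ N in atTop, ∃ v, φ^[N] (c * v) = y := by
  induction hy using Submodule.span_induction with
  | mem y hy =>
    obtain ⟨e, x, rfl⟩ := hy
    filter_upwards [eventually_ge_atTop e] with N hN
    exact exists_iterate_mul_eq_of_le hlin hsurj hp c x hN
  | zero =>
    refine .of_forall fun N => ⟨0, ?_⟩
    rw [mul_zero]
    exact iterate_map_zero (AddMonoidHom.mk' φ hadd) N
  | add y z _ _ hy hz =>
    filter_upwards [hy, hz] with N ⟨v, hv⟩ ⟨w, hw⟩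
    exact ⟨v + w, by rw [mul_add, iterate_map_add_of_map_add hadd, hv, hw]⟩
  | smul r y _ hy =>
    filter_upwards [hy] with N ⟨v, hv⟩
    exact ⟨r ^ p ^ N * v, by rw [mul_left_comm, iterate_pow_pow_mul hlin, hv, smul_eq_mul]⟩

end InvFrobeniusLinear

theorem stmt9_general {R : Type*} [CommRing R] (p : ℕ) [Fact p.Prime]
    (φ : R → R)
    (hadd : ∀ x y : R, φ (x + y) = φ x + φ y)
    (hlin : ∀ r x : R, φ (r ^ p * x) = r * φ x)
    (hsurj : Function.Surjective φ)
    (hJ : ∀ c : R, c ≠ 0 →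
      (1 : R) ∈ Ideal.span {y : R | ∃ (e : ℕ) (x : R), y = φ^[e] (c * x)}) :
    ∀ c : R, c ≠ 0 → ∃ (N : ℕ) (r : R), 1 ≤ N ∧
      ∃ ψ : R → R, ψ = (fun x => φ^[N] (r * x)) ∧
        (∀ x y : R, ψ (x + y) = ψ x + ψ y) ∧
        (∀ s x : R, ψ (s ^ p ^ N * x) = s * ψ x) ∧
        ψ c = 1 := by
  intro c hc
  obtain ⟨N, hN, v, hv⟩ := ((eventually_ge_atTop 1).and <|
    eventually_exists_iterate_mul_eq_of_mem_span hadd hlin hsurj (Fact.out : p.Prime).pos c 1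
      (hJ c hc)).exists
  refine ⟨N, v, hN, _, rfl, fun x y => ?_, fun s x => ?_, ?_⟩
  · rw [mul_add, iterate_map_add_of_map_add hadd]
  · rw [mul_left_comm, iterate_pow_pow_mul hlin]
  · rw [mul_comm, hv]

/-- Let `φ : R → R` be a surjective `p^{-1}`-linear map, and suppose that for every nonzero
`c ∈ R` the ideal `J_c = Σ_{e ≥ 0} R · φ^e (c R)` is all of `R`.  Then for every nonzero `c`
there exist `N ≥ 1`, `r ∈ R`, and the map `ψ = (x ↦ φ^N (r * x))` is additive,
`p^{-N}`-linear (`ψ (s ^ p ^ N * x) = s * ψ x`), and satisfies `ψ c = 1`. -/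
theorem stmt9 {R : Type*} [CommRing R] (p : ℕ) [Fact p.Prime] [CharP R p]
    (φ : R → R)
    (hadd : ∀ x y : R, φ (x + y) = φ x + φ y)
    (hlin : ∀ r x : R, φ (r ^ p * x) = r * φ x)
    (hsurj : Function.Surjective φ)
    (hJ : ∀ c : R, c ≠ 0 →
      (1 : R) ∈ Ideal.span {y : R | ∃ (e : ℕ) (x : R), y = φ^[e] (c * x)}) :
    ∀ c : R, c ≠ 0 → ∃ (N : ℕ) (r : R), 1 ≤ N ∧
      ∃ ψ : R → R, ψ = (fun x => φ^[N] (r * x)) ∧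
        (∀ x y : R, ψ (x + y) = ψ x + ψ y) ∧
        (∀ s x : R, ψ (s ^ p ^ N * x) = s * ψ x) ∧
        ψ c = 1 :=
  stmt9_general p φ hadd hlin hsurj hJ
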